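/- arXiv:1705.05525 — 2 statements merged into one kernel-verified Lean document; each statement's English description precedes it below -/
import Mathlib

section
/- Let n ≥ 1 and let K : ℝⁿ∖{0} → [0,∞) be measurable, even (K(−y) = K(y)), with ∫_{ℝⁿ} min(|y|², 1) K(y) dy < ∞. Let u, v : ℝⁿ → ℝ be smooth with compact support. Then Lu and Lv are defined at every point, the functions u·Lv and v·Lu are integrable on ℝⁿ, and ∫_{ℝⁿ} u(x) Lv(x) dx = ∫_{ℝⁿ} Lu(x) v(x) dx (global integration by parts for L). -/
open MeasureTheory
open scoped InnerProductSpace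

/-- The integro-differential operator with kernel `K`, in the symmetric-difference form
`Lu(x) = (1/2)∫ (2u(x) − u(x+y) − u(x−y)) K(y) dy`. -/
noncomputable def Lop {n : ℕ} (K u : EuclideanSpace ℝ (Fin n) → ℝ)
    (x : EuclideanSpace ℝ (Fin n)) : ℝ :=
  (1 / 2) * ∫ y, (2 * u x - u (x + y) - u (x - y)) * K y

/-- Absolute convergence of the integral defining `Lop K u x`. -/
def LopConverges {n : ℕ} (K u : EuclideanSpace ℝ (Fin n) → ℝ)
    (x : EuclideanSpace ℝ (Fin n)) : Prop :=
  MeasureTheory.Integrable (fun y => (2 * u x - u (x + y) - u (x - y)) * K y)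

open MeasureTheory

variable {n : ℕ}

local notation "E" => EuclideanSpace ℝ (Fin n)

/-- Second-difference bound for smooth compactly supported functions. -/
lemma second_diff_bound (u : E → ℝ) (hu : ContDiff ℝ (⊤ : ℕ∞) u) (hsupp : HasCompactSupport u) :
    ∃ C : ℝ, 0 ≤ C ∧ ∀ x y : E, |2 * u x - u (x + y) - u (x - y)| ≤ C * min (‖y‖ ^ 2) 1 := by
  obtain ⟨M, hM⟩ := hsupp.exists_bound_of_continuous hu.continuous
  have hM0 : 0 ≤ M := le_trans (norm_nonneg _) (hM 0)
  -- f = derivative of u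
  set f : E → E →L[ℝ] ℝ := fderiv ℝ u with hf
  have hfc : ContDiff ℝ (⊤ : ℕ∞) f := hu.fderiv_right (m := (⊤ : ℕ∞)) (by simp)
  have hfsupp : HasCompactSupport f := hsupp.fderiv (𝕜 := ℝ)
  obtain ⟨C2n, hC2n⟩ := ContDiff.lipschitzWith_of_hasCompactSupport hfsupp hfc (by simp)
  obtain ⟨C2, hC20, hlip⟩ : ∃ C2 : ℝ, 0 ≤ C2 ∧ ∀ a b : E, ‖f a - f b‖ ≤ C2 * ‖a - b‖ :=
    ⟨C2n, C2n.2, fun a b => by simpa [dist_eq_norm] using hC2n.dist_le_mul a b⟩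
  -- Taylor estimate
  have key : ∀ (x y : E), |u (x + y) - u x - f x y| ≤ C2 * ‖y‖ ^ 2 := by
    intro x y
    have := Convex.norm_image_sub_le_of_norm_fderiv_le' (f := u) (φ := f x)
      (C := C2 * ‖y‖) (s := Metric.closedBall x ‖y‖)
      (fun z _ => (hu.differentiable (by simp)).differentiableAt)
      (fun z hz => by
        calc ‖fderiv ℝ u z - f x‖ ≤ C2 * ‖z - x‖ := hlip z x
          _ ≤ C2 * ‖y‖ := by
              have : ‖z - x‖ ≤ ‖y‖ := by
                simpa [dist_eq_norm] using Metric.mem_closedBall.mp hz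
              exact mul_le_mul_of_nonneg_left this hC20)
      (convex_closedBall x ‖y‖)
      (Metric.mem_closedBall_self (norm_nonneg y))
      (Metric.mem_closedBall.mpr (show dist (x+y) x ≤ ‖y‖ by simp [dist_eq_norm]))
    have h2 : ‖u (x + y) - u x - (f x) (x + y - x)‖ ≤ C2 * ‖y‖ * ‖x + y - x‖ := this
    simp only [add_sub_cancel_left] at h2
    calc |u (x + y) - u x - f x y| ≤ C2 * ‖y‖ * ‖y‖ := h2
      _ = C2 * ‖y‖ ^ 2 := by ring
  refine ⟨max (2 * C2) (4 * M), le_max_of_le_right (by linarith), fun x y => ?_⟩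
  have h1 := key x y
  have h2 := key x (-y)
  have hfy : f x (-y) = -(f x y) := by simp
  rw [show x + -y = x - y by abel, hfy, norm_neg] at h2
  have hquad : |2 * u x - u (x + y) - u (x - y)| ≤ 2 * C2 * ‖y‖ ^ 2 := by
    have : 2 * u x - u (x + y) - u (x - y)
        = -(u (x + y) - u x - f x y) - (u (x - y) - u x - -(f x y)) := by ring
    rw [this]
    calc |(-(u (x + y) - u x - f x y) - (u (x - y) - u x - -(f x y)))|
        ≤ |(-(u (x + y) - u x - f x y))| + |(u (x - y) - u x - -(f x y))| := abs_sub _ _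
      _ = |(u (x + y) - u x - f x y)| + |(u (x - y) - u x - -(f x y))| := by rw [abs_neg]
      _ ≤ C2 * ‖y‖ ^ 2 + C2 * ‖y‖ ^ 2 := add_le_add h1 h2
      _ = 2 * C2 * ‖y‖ ^ 2 := by ring
  have hbdd : |2 * u x - u (x + y) - u (x - y)| ≤ 4 * M := by
    have a1 : |u x| ≤ M := hM x
    have a2 : |u (x + y)| ≤ M := hM _
    have a3 : |u (x - y)| ≤ M := hM _
    rw [abs_le] at a1 a2 a3 ⊢
    constructor <;> linarith
  rcases le_total (‖y‖ ^ 2) 1 with h | h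
  · rw [min_eq_left h]
    calc |2 * u x - u (x + y) - u (x - y)| ≤ 2 * C2 * ‖y‖ ^ 2 := hquad
      _ ≤ max (2 * C2) (4 * M) * ‖y‖ ^ 2 :=
          mul_le_mul_of_nonneg_right (le_max_left _ _) (sq_nonneg _)
  · rw [min_eq_right h]
    simpa using hbdd.trans (le_max_right (2 * C2) (4 * M))

/-- Translation identity: `∫ u(x)(2v(x)-v(x+y)-v(x-y)) dx = ∫ (2u(x)-u(x+y)-u(x-y)) v(x) dx`. -/
lemma translation_identity (u v : E → ℝ) (hu : Continuous u) (husupp : HasCompactSupport u)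
    (hv : Continuous v) (hvsupp : HasCompactSupport v) (y : E) :
    ∫ x, u x * (2 * v x - v (x + y) - v (x - y)) =
      ∫ x, (2 * u x - u (x + y) - u (x - y)) * v x := by
  have int_of : ∀ (f : E → ℝ), Continuous f → HasCompactSupport f → Integrable f volume :=
    fun f hf hfs => hf.integrable_of_hasCompactSupport hfs
  have i1 : Integrable (fun x : E => u x * v x) :=
    int_of _ (hu.mul hv) (husupp.mul_right)
  have i2 : Integrable (fun x : E => u x * v (x + y)) :=
    int_of _ (hu.mul (hv.comp (by fun_prop))) (husupp.mul_right)
  have i3 : Integrable (fun x : E => u x * v (x - y)) :=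
    int_of _ (hu.mul (hv.comp (by fun_prop))) (husupp.mul_right)
  have i4 : Integrable (fun x : E => u (x + y) * v x) :=
    int_of _ ((hu.comp (by fun_prop)).mul hv) (hvsupp.mul_left)
  have i5 : Integrable (fun x : E => u (x - y) * v x) :=
    int_of _ ((hu.comp (by fun_prop)).mul hv) (hvsupp.mul_left)
  have h1 : ∫ x, u x * v (x + y) = ∫ x, u (x - y) * v x := by
    have := integral_add_right_eq_self (μ := volume) (fun x : E => u (x - y) * v x) y
    rw [← this]
    congr 1; ext x; simp
  have h2 : ∫ x, u x * v (x - y) = ∫ x, u (x + y) * v x := by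
    have := integral_sub_right_eq_self (μ := volume) (fun x : E => u (x + y) * v x) y
    rw [← this]
    congr 1; ext x; simp
  have e1 : (fun x : E => u x * (2 * v x - v (x + y) - v (x - y)))
      = fun x => 2 * (u x * v x) - u x * v (x + y) - u x * v (x - y) := by ext x; ring
  have e2 : (fun x : E => (2 * u x - u (x + y) - u (x - y)) * v x)
      = fun x => 2 * (u x * v x) - u (x + y) * v x - u (x - y) * v x := by ext x; ring
  have i12 : Integrable (fun x : E => 2 * (u x * v x) - u x * v (x + y)) :=
    (i1.const_mul 2).sub i2
  have i14 : Integrable (fun x : E => 2 * (u x * v x) - u (x + y) * v x) :=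
    (i1.const_mul 2).sub i4
  have L : ∫ x, (2 * (u x * v x) - u x * v (x + y) - u x * v (x - y)) =
      ((∫ x, 2 * (u x * v x)) - ∫ x, u x * v (x + y)) - ∫ x, u x * v (x - y) := by
    rw [integral_sub i12 i3, integral_sub (i1.const_mul 2) i2]
  have R : ∫ x, (2 * (u x * v x) - u (x + y) * v x - u (x - y) * v x) =
      ((∫ x, 2 * (u x * v x)) - ∫ x, u (x + y) * v x) - ∫ x, u (x - y) * v x := by
    rw [integral_sub i14 i5, integral_sub (i1.const_mul 2) i4]
  rw [e1, e2, L, R, h1, h2]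
  ring

/-- Integrability on the product space of the Fubini integrand. -/
lemma prod_integrand_integrable (K u v : E → ℝ) (hKmeas : Measurable K)
    (hKpos : ∀ y, 0 ≤ K y)
    (hKint : Integrable (fun y : E => min (‖y‖ ^ 2) 1 * K y))
    (hu : Continuous u) (husupp : HasCompactSupport u) (hv : Continuous v)
    (C : ℝ) (hC : ∀ x y : E, |2 * v x - v (x + y) - v (x - y)| ≤ C * min (‖y‖ ^ 2) 1) :
    Integrable (fun p : E × E =>
      u p.1 * ((2 * v p.1 - v (p.1 + p.2) - v (p.1 - p.2)) * K p.2))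
      (volume.prod volume) := by
  have hcont : Continuous (fun p : E × E =>
      u p.1 * (2 * v p.1 - v (p.1 + p.2) - v (p.1 - p.2))) := by fun_prop
  have hmeasK : AEStronglyMeasurable (fun p : E × E => K p.2) (volume.prod volume) :=
    (hKmeas.comp measurable_snd).aestronglyMeasurable
  have hasm : AEStronglyMeasurable (fun p : E × E =>
      u p.1 * ((2 * v p.1 - v (p.1 + p.2) - v (p.1 - p.2)) * K p.2)) (volume.prod volume) :=
    (hcont.aestronglyMeasurable.mul hmeasK).congr (Filter.Eventually.of_forall fun p => by simp only [Pi.mul_apply]; ring)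
  have hg : Integrable (fun p : E × E => |u p.1| * (C * (min (‖p.2‖ ^ 2) 1 * K p.2)))
      (volume.prod volume) :=
    ((hu.integrable_of_hasCompactSupport husupp).abs).mul_prod (hKint.const_mul C)
  refine hg.mono' hasm (Filter.Eventually.of_forall fun p => ?_)
  have hK' : 0 ≤ K p.2 := hKpos p.2
  have hA := hC p.1 p.2
  have heq : ‖u p.1 * ((2 * v p.1 - v (p.1 + p.2) - v (p.1 - p.2)) * K p.2)‖
      = |u p.1| * (|2 * v p.1 - v (p.1 + p.2) - v (p.1 - p.2)| * K p.2) := by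
    rw [Real.norm_eq_abs, abs_mul, abs_mul, abs_of_nonneg hK']
  rw [heq]
  have h1 : |2 * v p.1 - v (p.1 + p.2) - v (p.1 - p.2)| * K p.2
      ≤ C * (min (‖p.2‖ ^ 2) 1 * K p.2) := by
    rw [← mul_assoc]; exact mul_le_mul_of_nonneg_right hA hK'
  exact mul_le_mul_of_nonneg_left h1 (abs_nonneg _)

/-- Global integration by parts for `L`: `∫ u Lv = ∫ (Lu) v` for smooth, compactly
supported `u, v`. -/
theorem global_integration_by_parts
    (n : ℕ) (hn : 1 ≤ n)
    (K : EuclideanSpace ℝ (Fin n) → ℝ) (hKmeas : Measurable K)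
    (hKpos : ∀ y, 0 ≤ K y)
    (hKeven : ∀ y, K (-y) = K y)
    (hKint : MeasureTheory.Integrable
      (fun y : EuclideanSpace ℝ (Fin n) => min (‖y‖ ^ 2) 1 * K y))
    (u v : EuclideanSpace ℝ (Fin n) → ℝ)
    (hu : ContDiff ℝ (⊤ : ℕ∞) u) (husupp : HasCompactSupport u)
    (hv : ContDiff ℝ (⊤ : ℕ∞) v) (hvsupp : HasCompactSupport v) :
    (∀ x, LopConverges K u x ∧ LopConverges K v x) ∧
    MeasureTheory.Integrable (fun x => u x * Lop K v x) ∧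
    MeasureTheory.Integrable (fun x => Lop K u x * v x) ∧
    ∫ x, u x * Lop K v x = ∫ x, Lop K u x * v x := by
  obtain ⟨Cu, hCu0, hCu⟩ := second_diff_bound u hu husupp
  obtain ⟨Cv, hCv0, hCv⟩ := second_diff_bound v hv hvsupp
  -- pointwise convergence
  have conv : ∀ (w : EuclideanSpace ℝ (Fin n) → ℝ), Continuous w →
      ∀ (C : ℝ), (∀ x y, |2 * w x - w (x + y) - w (x - y)| ≤ C * min (‖y‖ ^ 2) 1) →
      ∀ x, LopConverges K w x := by
    intro w hw C hC x
    refine (hKint.const_mul C).mono' ?_ (Filter.Eventually.of_forall fun y => ?_)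
    · exact ((Continuous.aestronglyMeasurable (by fun_prop :
        Continuous fun y => 2 * w x - w (x + y) - w (x - y))).mul
          hKmeas.aestronglyMeasurable).congr
        (Filter.Eventually.of_forall fun y => by simp [Pi.mul_apply])
    · have heq : ‖(2 * w x - w (x + y) - w (x - y)) * K y‖
          = |2 * w x - w (x + y) - w (x - y)| * K y := by
        rw [Real.norm_eq_abs, abs_mul, abs_of_nonneg (hKpos y)]
      rw [heq, ← mul_assoc]
      exact mul_le_mul_of_nonneg_right (hC x y) (hKpos y)
  -- product integrability for the two Fubini swaps
  have hFv := prod_integrand_integrable K u v hKmeas hKpos hKint hu.continuous husupp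
    hv.continuous Cv hCv
  have hFu := prod_integrand_integrable K v u hKmeas hKpos hKint hv.continuous hvsupp
    hu.continuous Cu hCu
  -- representations
  have hrepr : ∀ x, u x * Lop K v x
      = (1 / 2) * ∫ y, u x * ((2 * v x - v (x + y) - v (x - y)) * K y) := by
    intro x
    simp only [Lop]
    rw [integral_const_mul]
    ring
  have hrepr' : ∀ x, Lop K u x * v x
      = (1 / 2) * ∫ y, v x * ((2 * u x - u (x + y) - u (x - y)) * K y) := by
    intro x
    simp only [Lop]
    rw [integral_const_mul]
    ring
  refine ⟨fun x => ⟨conv u hu.continuous Cu hCu x, conv v hv.continuous Cv hCv x⟩, ?_, ?_, ?_⟩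
  · exact ((hFv.integral_prod_left).const_mul (1 / 2)).congr
      (Filter.Eventually.of_forall fun x => (hrepr x).symm)
  · exact ((hFu.integral_prod_left).const_mul (1 / 2)).congr
      (Filter.Eventually.of_forall fun x => (hrepr' x).symm)
  · have inner : ∀ y, (∫ x, u x * ((2 * v x - v (x + y) - v (x - y)) * K y))
        = ∫ x, v x * ((2 * u x - u (x + y) - u (x - y)) * K y) := by
      intro y
      have h1 : (fun x => u x * ((2 * v x - v (x + y) - v (x - y)) * K y))
          = fun x => (u x * (2 * v x - v (x + y) - v (x - y))) * K y :=
        funext fun x => by ring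
      have h2 : (fun x => v x * ((2 * u x - u (x + y) - u (x - y)) * K y))
          = fun x => ((2 * u x - u (x + y) - u (x - y)) * v x) * K y :=
        funext fun x => by ring
      rw [h1, h2, integral_mul_const, integral_mul_const,
        translation_identity u v hu.continuous husupp hv.continuous hvsupp y]
    calc ∫ x, u x * Lop K v x
        = ∫ x, (1 / 2) * ∫ y, u x * ((2 * v x - v (x + y) - v (x - y)) * K y) := by
          simp_rw [hrepr]
      _ = (1 / 2) * ∫ x, ∫ y, u x * ((2 * v x - v (x + y) - v (x - y)) * K y) := by
          rw [integral_const_mul]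
      _ = (1 / 2) * ∫ y, ∫ x, u x * ((2 * v x - v (x + y) - v (x - y)) * K y) := by
          rw [integral_integral_swap hFv]
      _ = (1 / 2) * ∫ y, ∫ x, v x * ((2 * u x - u (x + y) - u (x - y)) * K y) := by
          congr 1
          exact integral_congr_ae (Filter.Eventually.of_forall fun y => inner y)
      _ = (1 / 2) * ∫ x, ∫ y, v x * ((2 * u x - u (x + y) - u (x - y)) * K y) := by
          rw [← integral_integral_swap hFu]
      _ = ∫ x, (1 / 2) * ∫ y, v x * ((2 * u x - u (x + y) - u (x - y)) * K y) := by
          rw [integral_const_mul]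
      _ = ∫ x, Lop K u x * v x := by
          simp_rw [hrepr']
end

section
/- Let s ∈ (0,1]. There exists a constant C, depending only on s, with the following property. Let n ≥ 1, let Ω ⊂ ℝⁿ be an open set, write d(x) = dist(x, ℝⁿ∖Ω), and let C₀ ≥ 0. Suppose u : ℝⁿ → ℝ vanishes on ℝⁿ∖Ω and satisfies: (i) |u(x)| ≤ C₀ d(x)ˢ for every x ∈ Ω, and (ii) |u(x) − u(y)| ≤ C₀ |x−y|ˢ for every x ∈ Ω and every y with |y−x| ≤ d(x)/2. Then |u(x) − u(y)| ≤ C·C₀·|x−y|ˢ for all x, y ∈ ℝⁿ; that is, u is globally s-Hölder continuous with seminorm controlled by C₀. -/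
/-!
Extend the growth bound to all of `ℝⁿ` (it is trivial off `Ω`, where `u = 0 = d`). If
`d(x) > 2|x - y|`, then `x ∈ Ω` and `y` lies in the ball where the interior estimate holds.
Otherwise `d(x) ≤ 2|x - y|` and, `d` being 1-Lipschitz, `d(y) ≤ 3|x - y|`, so the growth
bound at both points gives `|u x - u y| ≤ |u x| + |u y| ≤ 2 · 3ˢ C₀ |x - y|ˢ`.
-/

open Metric

section Patching

variable {X : Type*} [PseudoMetricSpace X] {F Ω : Set X} {u : X → ℝ} {s C₀ : ℝ}

lemma abs_le_mul_rpow_of_infDist_le (hs : 0 ≤ s) (hC₀ : 0 ≤ C₀)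
    (hgrow : ∀ z, |u z| ≤ C₀ * infDist z F ^ s) {z : X} {r : ℝ} (hz : infDist z F ≤ r) :
    |u z| ≤ C₀ * r ^ s :=
  (hgrow z).trans <| mul_le_mul_of_nonneg_left (Real.rpow_le_rpow infDist_nonneg hz hs) hC₀

lemma abs_sub_le_of_infDist_le_two_mul_dist (hs : 0 ≤ s) (hC₀ : 0 ≤ C₀)
    (hgrow : ∀ z, |u z| ≤ C₀ * infDist z F ^ s) {x y : X}
    (hxy : infDist x F ≤ 2 * dist x y) :
    |u x - u y| ≤ 2 * 3 ^ s * C₀ * dist x y ^ s := by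
  have hx : infDist x F ≤ 3 * dist x y := by linarith [dist_nonneg (x := x) (y := y)]
  have hy : infDist y F ≤ 3 * dist x y := by
    linarith [infDist_le_infDist_add_dist (x := y) (y := x) (s := F), dist_comm y x]
  have h3 : (3 * dist x y) ^ s = 3 ^ s * dist x y ^ s := Real.mul_rpow (by norm_num) dist_nonneg
  calc |u x - u y| ≤ |u x| + |u y| := abs_sub _ _
    _ ≤ C₀ * (3 * dist x y) ^ s + C₀ * (3 * dist x y) ^ s :=
      add_le_add (abs_le_mul_rpow_of_infDist_le hs hC₀ hgrow hx)
        (abs_le_mul_rpow_of_infDist_le hs hC₀ hgrow hy)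
    _ = 2 * 3 ^ s * C₀ * dist x y ^ s := by rw [h3]; ring

lemma abs_le_mul_infDist_compl_rpow (hs : 0 < s) (hu0 : ∀ x ∉ Ω, u x = 0)
    (hgrow : ∀ x ∈ Ω, |u x| ≤ C₀ * infDist x Ωᶜ ^ s) (x : X) :
    |u x| ≤ C₀ * infDist x Ωᶜ ^ s := by
  by_cases hx : x ∈ Ω
  · exact hgrow x hx
  · simp [hu0 x hx, infDist_zero_of_mem (Set.mem_compl hx), Real.zero_rpow hs.ne']

lemma abs_sub_le_of_interior_holder_of_growth (hs : 0 < s) (hC₀ : 0 ≤ C₀)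
    (hu0 : ∀ x ∉ Ω, u x = 0) (hgrow : ∀ x ∈ Ω, |u x| ≤ C₀ * infDist x Ωᶜ ^ s)
    (hint : ∀ x ∈ Ω, ∀ y, dist y x ≤ infDist x Ωᶜ / 2 → |u x - u y| ≤ C₀ * dist x y ^ s)
    (x y : X) :
    |u x - u y| ≤ 2 * 3 ^ s * C₀ * dist x y ^ s := by
  rcases le_or_gt (infDist x Ωᶜ) (2 * dist x y) with hfar | hfar
  · exact abs_sub_le_of_infDist_le_two_mul_dist hs.le hC₀
      (abs_le_mul_infDist_compl_rpow hs hu0 hgrow) hfar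
  · have hx : x ∈ Ω := by
      by_contra hx
      rw [infDist_zero_of_mem (Set.mem_compl hx)] at hfar
      linarith [dist_nonneg (x := x) (y := y)]
    have hC : 1 ≤ 2 * (3 : ℝ) ^ s := by
      linarith [Real.one_le_rpow (by norm_num : (1 : ℝ) ≤ 3) hs.le]
    calc |u x - u y| ≤ C₀ * dist x y ^ s := hint x hx y (by rw [dist_comm]; linarith)
      _ ≤ 2 * 3 ^ s * C₀ * dist x y ^ s := by
        rw [mul_assoc]
        exact le_mul_of_one_le_left (by positivity) hC

end Patching

theorem global_Holder_patching_general (s : ℝ) (hs0 : 0 < s) :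
    ∃ C : ℝ, 0 < C ∧
      ∀ (n : ℕ), 1 ≤ n →
      ∀ Ω : Set (EuclideanSpace ℝ (Fin n)), IsOpen Ω →
      ∀ C₀ : ℝ, 0 ≤ C₀ →
      ∀ u : EuclideanSpace ℝ (Fin n) → ℝ,
        (∀ x ∉ Ω, u x = 0) →
        (∀ x ∈ Ω, |u x| ≤ C₀ * Metric.infDist x Ωᶜ ^ s) →
        (∀ x ∈ Ω, ∀ y : EuclideanSpace ℝ (Fin n),
          dist y x ≤ Metric.infDist x Ωᶜ / 2 → |u x - u y| ≤ C₀ * dist x y ^ s) →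
        ∀ x y : EuclideanSpace ℝ (Fin n), |u x - u y| ≤ C * C₀ * dist x y ^ s :=
  ⟨2 * 3 ^ s, by positivity, fun _ _ _ _ _ hC₀ _ hu0 hgrow hint =>
    abs_sub_le_of_interior_holder_of_growth hs0 hC₀ hu0 hgrow hint⟩

/-- Patching lemma: an interior Hölder estimate at scale `d(x)/2` together with the
growth bound `|u| ≤ C₀ dˢ` yields a global `s`-Hölder estimate, with a constant
depending only on `s`. -/
theorem global_Holder_patching (s : ℝ) (hs0 : 0 < s) (hs1 : s ≤ 1) :
    ∃ C : ℝ, 0 < C ∧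
      ∀ (n : ℕ), 1 ≤ n →
      ∀ Ω : Set (EuclideanSpace ℝ (Fin n)), IsOpen Ω →
      ∀ C₀ : ℝ, 0 ≤ C₀ →
      ∀ u : EuclideanSpace ℝ (Fin n) → ℝ,
        (∀ x ∉ Ω, u x = 0) →
        (∀ x ∈ Ω, |u x| ≤ C₀ * Metric.infDist x Ωᶜ ^ s) →
        (∀ x ∈ Ω, ∀ y : EuclideanSpace ℝ (Fin n),
          dist y x ≤ Metric.infDist x Ωᶜ / 2 → |u x - u y| ≤ C₀ * dist x y ^ s) →
        ∀ x y : EuclideanSpace ℝ (Fin n), |u x - u y| ≤ C * C₀ * dist x y ^ s :=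
  global_Holder_patching_general s hs0
end
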